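/- arXiv:2101.02332 — 3 statements merged into one kernel-verified Lean document; each statement's English description precedes it below -/
import Mathlib

section
/- Let E be a real inner product space, U ∈ E with ‖U‖ = 1, and suppose for i = 1, …, k the residuals are R_i = b • U + ξ_i with a common nonzero loading b ∈ ℝ, where ⟨U, ξ_i⟩ = 0 for all i, ⟨ξ_i, ξ_j⟩ = 0 for i ≠ j, and ‖ξ_i‖² = s² for all i. Then the rescaled average of the residuals recovers U with error ‖(1/(b·k)) • (R_1 + ⋯ + R_k) - U‖² = s²/(k·b²); in particular this error tends to 0 as k → ∞, so the latent variable U can be inferred from the residuals of its children up to sign and scale when it has sufficiently many children. -/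
open scoped RealInnerProductSpace

/-- Inferrability: if the residuals of the `k` children of a normalized latent
variable `U` are `R_i = b • U + ξ_i` with common nonzero loading `b`, noises
orthogonal to `U`, mutually orthogonal, of common squared norm `s²`, then the
rescaled average of the residuals recovers `U` with squared error
`s²/(k·b²)`, which vanishes as the number of children grows. -/
theorem latent_recovery_from_residuals
    {E : Type*} [NormedAddCommGroup E] [InnerProductSpace ℝ E]
    (U : E) (hU : ‖U‖ = 1)
    (k : ℕ) (hk : 0 < k) (b s : ℝ) (hb : b ≠ 0)
    (ξ : Fin k → E) (R : Fin k → E)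
    (hR : ∀ i, R i = b • U + ξ i)
    (hξU : ∀ i, ⟪U, ξ i⟫ = 0)
    (hξξ : ∀ i j, i ≠ j → ⟪ξ i, ξ j⟫ = 0)
    (hξnorm : ∀ i, ‖ξ i‖ ^ 2 = s ^ 2) :
    ‖(1 / (b * k)) • (∑ i, R i) - U‖ ^ 2 = s ^ 2 / (k * b ^ 2) := by
  have hkR : (k : ℝ) ≠ 0 := Nat.cast_ne_zero.mpr hk.ne'
  have hsum : ∑ i, R i = (b * k) • U + ∑ i, ξ i := by
    simp only [hR, Finset.sum_add_distrib, Finset.sum_const, Finset.card_univ,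
      Fintype.card_fin, ← Nat.cast_smul_eq_nsmul ℝ, smul_smul]
    ring_nf
  have key : (1 / (b * k)) • (∑ i, R i) - U = (1 / (b * k)) • (∑ i, ξ i) := by
    rw [hsum, smul_add, smul_smul, one_div, inv_mul_cancel₀ (mul_ne_zero hb hkR),
      one_smul]
    abel
  have hnormsum : ‖∑ i, ξ i‖ ^ 2 = k * s ^ 2 := by
    have : ⟪∑ i, ξ i, ∑ j, ξ j⟫ = ∑ i : Fin k, ‖ξ i‖ ^ 2 := by
      rw [sum_inner]
      refine Finset.sum_congr rfl fun i _ => ?_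
      rw [inner_sum, Finset.sum_eq_single i (fun j _ hj => hξξ i j (Ne.symm hj))
        (by simp), real_inner_self_eq_norm_sq]
    rw [← real_inner_self_eq_norm_sq, this]
    simp [hξnorm, Finset.sum_const, mul_comm]
  rw [key, norm_smul, mul_pow, hnormsum]
  rw [Real.norm_eq_abs, sq_abs]
  field_simp
end

section
/- Let x₁, …, x_p be vectors in a real inner product space E whose Gram matrix G (with entries G_{ij} = ⟨x_i, x_j⟩) is invertible, and fix an index j. Let K_{-j} be the (complete, finite-dimensional) span of the vectors {x_i : i ≠ j} and P_{-j} the orthogonal projection onto K_{-j}. Then the j-th diagonal entry of the inverse Gram matrix equals the reciprocal of the squared distance from x_j to the span of the other vectors: (G⁻¹)_{jj} = 1 / ‖x_j - P_{-j} x_j‖². -/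
open scoped RealInnerProductSpace

/-- The `j`-th diagonal entry of the inverse Gram matrix of the design vectors
`x₁, …, x_p` equals the reciprocal of the squared distance from `x_j` to the
span of the other vectors (the variance inflation identity). -/
theorem inverse_gram_diagonal_eq
    {E : Type*} [NormedAddCommGroup E] [InnerProductSpace ℝ E]
    (p : ℕ) (x : Fin p → E)
    (G : Matrix (Fin p) (Fin p) ℝ) (hG : ∀ i j, G i j = ⟪x i, x j⟫)
    [Invertible G] (j : Fin p)
    (K : Submodule ℝ E) (hK : K = Submodule.span ℝ (x '' {i | i ≠ j}))
    [CompleteSpace K] :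
    G⁻¹ j j = 1 / ‖x j - (Submodule.orthogonalProjectionOnto K (x j) : E)‖ ^ 2 := by
  classical
  set Px : E := (Submodule.orthogonalProjectionOnto K (x j) : E) with hPx
  set r : E := x j - Px with hr
  have hPxK : Px ∈ K := (Submodule.orthogonalProjectionOnto K (x j)).2
  have hrOrth : r ∈ Kᗮ := Submodule.sub_starProjection_mem_orthogonal (K := K) (x j)
  have hrK : ∀ v ∈ K, ⟪v, r⟫ = 0 := fun v hv => (Submodule.mem_orthogonal K r).mp hrOrth v hv
  -- coefficients for Px
  have hPx_mem : Px ∈ Submodule.span ℝ (Set.range (fun i : {i : Fin p // i ≠ j} => x i)) := by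
    have : Px ∈ Submodule.span ℝ (x '' {i | i ≠ j}) := hK ▸ hPxK
    rwa [Set.image_eq_range] at this
  obtain ⟨c, hc⟩ := (Submodule.mem_span_range_iff_exists_fun ℝ).mp hPx_mem
  set a : Fin p → ℝ := fun i => if h : i = j then 1 else -(c ⟨i, h⟩) with ha
  have hsum : ∑ i, a i • x i = r := by
    rw [← Finset.add_sum_erase _ _ (Finset.mem_univ j)]
    have h1 : a j = 1 := by simp [ha]
    have h2 : ∑ i ∈ Finset.univ.erase j, a i • x i = -Px := by
      rw [Finset.sum_subtype (p := fun i : Fin p => i ≠ j) (F := inferInstance)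
        (Finset.univ.erase j) (fun i => by simp) (fun i => a i • x i)]
      rw [← hc, ← Finset.sum_neg_distrib]
      apply Finset.sum_congr rfl
      intro i _
      simp [ha, i.2, neg_smul]
    rw [h1, h2, one_smul, hr, sub_eq_add_neg]
  have hGa : ∀ i, (G.mulVec a) i = ⟪x i, r⟫ := by
    intro i
    rw [← hsum, inner_sum]
    simp only [Matrix.mulVec, dotProduct, real_inner_smul_right, hG]
    exact Finset.sum_congr rfl fun k _ => mul_comm _ _
  have hval : ∀ i, (G.mulVec a) i = if i = j then ‖r‖ ^ 2 else 0 := by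
    intro i
    rw [hGa i]
    by_cases h : i = j
    · subst h
      have : x i = r + Px := by rw [hr]; abel
      rw [this, inner_add_left, hrK Px hPxK, add_zero, real_inner_self_eq_norm_sq]
      simp
    · have hxi : x i ∈ K := by
        rw [hK]
        exact Submodule.subset_span ⟨i, h, rfl⟩
      simp [hrK (x i) hxi, h]
  have hinv : G⁻¹.mulVec (G.mulVec a) = a := by
    rw [Matrix.mulVec_mulVec, Matrix.inv_mul_of_invertible, Matrix.one_mulVec]
  have hj : G⁻¹ j j * ‖r‖ ^ 2 = 1 := by
    have := congrFun hinv j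
    rw [Matrix.mulVec, dotProduct] at this
    have hsimp : ∑ k, G⁻¹ j k * (G.mulVec a) k = G⁻¹ j j * ‖r‖ ^ 2 := by
      rw [Finset.sum_eq_single j]
      · rw [hval j]; simp
      · intro k _ hk; rw [hval k]; simp [hk]
      · simp
    rw [hsimp] at this
    rw [this]
    simp [ha]
  have hne : ‖r‖ ^ 2 ≠ 0 := by
    intro h0
    rw [h0, mul_zero] at hj
    exact one_ne_zero hj.symm
  rw [eq_div_iff hne]
  exact hj
end

section
/- Let E be a real inner product space, K a complete subspace, and P the orthogonal projection onto K. Suppose two variables satisfy N₁ = x₁ + a₁ • U + ξ₁ and N₂ = x₂ + a₂ • U + ξ₂ with x₁, x₂ ∈ K, a₁, a₂ real scalars, the latent variable U ∉ K, and noises ξ₁, ξ₂ orthogonal to K, orthogonal to each other, and orthogonal to U - P U. If a₁ ≠ 0 and a₂ ≠ 0, then the residuals are correlated through the latent variable: ⟨N₁ - P N₁, N₂ - P N₂⟩ = a₁ a₂ ‖U - P U‖² ≠ 0. -/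
open scoped RealInnerProductSpace

/-- An unobserved pleiotropic confounder induces correlation among the
residuals of its children: if `N₁ = x₁ + a₁ • U + ξ₁` and
`N₂ = x₂ + a₂ • U + ξ₂` with `x₁, x₂ ∈ K`, `U ∉ K`, noises orthogonal to `K`,
to each other, and to the residual of `U`, and `a₁, a₂ ≠ 0`, then the inner
product of the residuals equals `a₁ a₂ ‖U - P U‖²` and is nonzero. -/
theorem latent_confounder_correlates_residuals
    {E : Type*} [NormedAddCommGroup E] [InnerProductSpace ℝ E]
    (K : Submodule ℝ E) [CompleteSpace K]
    (N₁ N₂ x₁ x₂ U ξ₁ ξ₂ : E) (a₁ a₂ : ℝ)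
    (hx₁ : x₁ ∈ K) (hx₂ : x₂ ∈ K) (hU : U ∉ K)
    (hξ₁K : ∀ w ∈ K, ⟪ξ₁, w⟫ = 0) (hξ₂K : ∀ w ∈ K, ⟪ξ₂, w⟫ = 0)
    (hξξ : ⟪ξ₁, ξ₂⟫ = 0)
    (hξ₁U : ⟪ξ₁, U - (K.orthogonalProjectionOnto U : E)⟫ = 0)
    (hξ₂U : ⟪ξ₂, U - (K.orthogonalProjectionOnto U : E)⟫ = 0)
    (hN₁ : N₁ = x₁ + a₁ • U + ξ₁) (hN₂ : N₂ = x₂ + a₂ • U + ξ₂)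
    (ha₁ : a₁ ≠ 0) (ha₂ : a₂ ≠ 0) :
    ⟪N₁ - (K.orthogonalProjectionOnto N₁ : E),
        N₂ - (K.orthogonalProjectionOnto N₂ : E)⟫
      = a₁ * a₂ * ‖U - (K.orthogonalProjectionOnto U : E)‖ ^ 2 ∧
    ⟪N₁ - (K.orthogonalProjectionOnto N₁ : E),
        N₂ - (K.orthogonalProjectionOnto N₂ : E)⟫ ≠ 0 := by
  set r : E := U - (K.orthogonalProjectionOnto U : E) with hr
  have hξ₁mem : ξ₁ ∈ Kᗮ := (Submodule.mem_orthogonal' K ξ₁).2 hξ₁K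
  have hξ₂mem : ξ₂ ∈ Kᗮ := (Submodule.mem_orthogonal' K ξ₂).2 hξ₂K
  have hPξ₁ : K.orthogonalProjectionOnto ξ₁ = 0 :=
    Submodule.orthogonalProjectionOnto_apply_of_mem_orthogonal hξ₁mem
  have hPξ₂ : K.orthogonalProjectionOnto ξ₂ = 0 :=
    Submodule.orthogonalProjectionOnto_apply_of_mem_orthogonal hξ₂mem
  have hPx₁ : (K.orthogonalProjectionOnto x₁ : E) = x₁ := by
    rw [← Submodule.starProjection_apply, Submodule.starProjection_eq_self_iff.2 hx₁]
  have hPx₂ : (K.orthogonalProjectionOnto x₂ : E) = x₂ := by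
    rw [← Submodule.starProjection_apply, Submodule.starProjection_eq_self_iff.2 hx₂]
  have hres₁ : N₁ - (K.orthogonalProjectionOnto N₁ : E) = a₁ • r + ξ₁ := by
    rw [hN₁, map_add, map_add, map_smul, hPξ₁]
    push_cast
    rw [hPx₁, hr]
    module
  have hres₂ : N₂ - (K.orthogonalProjectionOnto N₂ : E) = a₂ • r + ξ₂ := by
    rw [hN₂, map_add, map_add, map_smul, hPξ₂]
    push_cast
    rw [hPx₂, hr]
    module
  have hrξ₁ : ⟪r, ξ₁⟫ = 0 := by rw [real_inner_comm]; exact hξ₁U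
  have hrξ₂ : ⟪r, ξ₂⟫ = 0 := by rw [real_inner_comm]; exact hξ₂U
  have key : ⟪N₁ - (K.orthogonalProjectionOnto N₁ : E),
      N₂ - (K.orthogonalProjectionOnto N₂ : E)⟫ = a₁ * a₂ * ‖r‖ ^ 2 := by
    rw [hres₁, hres₂]
    simp [inner_add_left, inner_add_right, inner_smul_left, inner_smul_right,
      hrξ₁, hrξ₂, hξ₁U, hξ₂U, hξξ, real_inner_self_eq_norm_sq]
    ring
  refine ⟨key, key ▸ ?_⟩
  have hrne : r ≠ 0 := by
    intro h
    apply hU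
    have : U = (K.orthogonalProjectionOnto U : E) := by
      rwa [hr, sub_eq_zero] at h
    rw [this]; exact (K.orthogonalProjectionOnto U).2
  have : ‖r‖ ^ 2 ≠ 0 := pow_ne_zero _ (norm_ne_zero_iff.2 hrne)
  exact mul_ne_zero (mul_ne_zero ha₁ ha₂) this
end
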